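/- ζ(2,1) = ζ(3). -/

import Mathlib

open scoped BigOperators

/-- Riemann zeta as a real series: `ζ(p) = Σ_{n≥1} 1/n^p`. -/
noncomputable def rzeta (p : ℝ) : ℝ := ∑' n : ℕ, 1 / (n + 1 : ℝ) ^ p

/-- Double zeta value `ζ(a,b) = Σ_{m>n≥1} 1/(m^a n^b)`. -/
noncomputable def zeta2 (a b : ℝ) : ℝ :=
  ∑' q : {q : ℕ × ℕ // q.2 < q.1 ∧ 0 < q.2},
    1 / ((q.1.1 : ℝ) ^ a * (q.1.2 : ℝ) ^ b)

/-- Triple zeta value `ζ(a,b,c) = Σ_{l>m>n≥1} 1/(l^a m^b n^c)`. -/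
noncomputable def zeta3 (a b c : ℝ) : ℝ :=
  ∑' t : {t : ℕ × ℕ × ℕ // t.2.1 < t.1 ∧ t.2.2 < t.2.1 ∧ 0 < t.2.2},
    1 / ((t.1.1 : ℝ) ^ a * (t.1.2.1 : ℝ) ^ b * (t.1.2.2 : ℝ) ^ c)

/-- Tail of the zeta series: `ζ(p) − Σ_{i=1}^n 1/i^p`. -/
noncomputable def zetaTail (p : ℝ) (n : ℕ) : ℝ :=
  rzeta p - ∑ i ∈ Finset.range n, 1 / (i + 1 : ℝ) ^ p

/-- Polylogarithm `Li_p(z) = Σ_{j≥1} z^j / j^p`. -/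
noncomputable def polyLog (p : ℝ) (z : ℝ) : ℝ :=
  ∑' j : ℕ, z ^ (j + 1) / (j + 1 : ℝ) ^ p

/-!
Euler's argument. The series `S = Σ_{a,b ≥ 1} 1/(ab(a+b))` is evaluated in two ways. The partial
fraction `1/(ab(a+b)) = 1/((a+b)² a) + 1/((a+b)² b)` and the symmetry `a ↔ b` give `S = 2 ζ(2,1)`.
Summing over `b` first, `Σ_b (1/b - 1/(a+b)) = H_a` telescopes, so
`S = Σ_a H_a / a² = Σ_{n ≤ a} 1/(a² n)`, whose diagonal `n = a` is `ζ(3)` and whose part `n < a`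
is `ζ(2,1)`. All sums are taken in `ℝ≥0∞`, where rearranging is free, and `ζ(2,1) ≤ ζ(2) < ∞`
(from `Σ_{m > n} 1/m² ≤ 1/n`) allows cancelling `ζ(2,1)` from `2 ζ(2,1) = ζ(2,1) + ζ(3)`.
-/

open Finset Filter Topology
open scoped ENNReal

theorem hasSum_sub_succ_of_antitone {f : ℕ → ℝ} (hf : Antitone f)
    (hlim : Tendsto f atTop (𝓝 0)) : HasSum (fun k => f k - f (k + 1)) (f 0) := by
  rw [hasSum_iff_tendsto_nat_of_nonneg fun k => sub_nonneg.2 (hf k.le_succ)]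
  simp_rw [sum_range_sub']
  simpa using tendsto_const_nhds.sub hlim

theorem hasSum_sub_add_of_antitone {f : ℕ → ℝ} (hf : Antitone f)
    (hlim : Tendsto f atTop (𝓝 0)) (n : ℕ) :
    HasSum (fun k => f k - f (k + n)) (∑ i ∈ range n, f i) := by
  induction n with
  | zero => simp
  | succ n ih =>
    have hstep := hasSum_sub_succ_of_antitone (f := fun k => f (k + n))
      (fun _ _ h => hf (by omega)) (hlim.comp (tendsto_add_atTop_nat n))
    rw [sum_range_succ]
    convert ih.add hstep using 1
    · ext k
      ring_nf
    · simp

theorem antitone_one_div_natCast_add_one : Antitone fun n : ℕ => 1 / ((n : ℝ) + 1) :=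
  fun _ _ hab => one_div_le_one_div_of_le (by positivity) (by gcongr)

theorem ENNReal.tsum_prod_eq_tsum_sum_antidiagonal {A : Type*} [AddMonoid A]
    [HasAntidiagonal A] (f : A × A → ℝ≥0∞) :
    ∑' p, f p = ∑' n, ∑ p ∈ antidiagonal n, f p := by
  rw [← HasAntidiagonal.sigmaAntidiagonalEquivProd.tsum_eq, ENNReal.tsum_sigma']
  exact tsum_congr fun n => Finset.tsum_subtype (antidiagonal n) f

theorem tsum_eq_toReal_tsum_ofReal {α : Type*} {f : α → ℝ} (hf : ∀ a, 0 ≤ f a) :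
    ∑' a, f a = (∑' a, ENNReal.ofReal (f a)).toReal := by
  rw [ENNReal.tsum_toReal_eq fun _ => ENNReal.ofReal_ne_top]
  simp only [ENNReal.toReal_ofReal (hf _)]

-- Indices start at `0`: `a = j + 1`, `b = k + 1`, and `m = a + b`, `n = b` in `ζ(2,1)`.
noncomputable def eulerTerm (j k : ℕ) : ℝ := 1 / ((j + 1) * (k + 1) * (j + k + 2))

noncomputable def zeta21Term (j k : ℕ) : ℝ := 1 / ((j + k + 2) ^ 2 * (k + 1))

theorem eulerTerm_nonneg (j k : ℕ) : 0 ≤ eulerTerm j k := by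
  unfold eulerTerm
  positivity

theorem zeta21Term_nonneg (j k : ℕ) : 0 ≤ zeta21Term j k := by
  unfold zeta21Term
  positivity

theorem eulerTerm_eq_add (j k : ℕ) : eulerTerm j k = zeta21Term j k + zeta21Term k j := by
  unfold eulerTerm zeta21Term
  field_simp
  ring

theorem eulerTerm_eq_mul_sub (j k : ℕ) :
    eulerTerm j k =
      1 / ((j : ℝ) + 1) ^ 2 * (1 / ((k : ℝ) + 1) - 1 / (((k + (j + 1) : ℕ) : ℝ) + 1)) := by
  unfold eulerTerm
  push_cast
  field_simp
  ring

theorem hasSum_eulerTerm (j : ℕ) :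
    HasSum (eulerTerm j) (∑ i ∈ range (j + 1), 1 / (((j : ℝ) + 1) ^ 2 * (i + 1))) := by
  simp_rw [funext (eulerTerm_eq_mul_sub j), ← one_div_mul_one_div, ← mul_sum]
  exact (hasSum_sub_add_of_antitone antitone_one_div_natCast_add_one
    tendsto_one_div_add_atTop_nhds_zero_nat (j + 1)).mul_left _

theorem tsum_ofReal_eulerTerm_eq_add_self :
    ∑' p : ℕ × ℕ, ENNReal.ofReal (eulerTerm p.1 p.2) =
      (∑' p : ℕ × ℕ, ENNReal.ofReal (zeta21Term p.1 p.2)) +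
        ∑' p : ℕ × ℕ, ENNReal.ofReal (zeta21Term p.1 p.2) := by
  simp_rw [eulerTerm_eq_add, ENNReal.ofReal_add (zeta21Term_nonneg _ _) (zeta21Term_nonneg _ _),
    ENNReal.tsum_add]
  congr 1
  exact (Equiv.prodComm ℕ ℕ).tsum_eq fun p => ENNReal.ofReal (zeta21Term p.1 p.2)

theorem tsum_ofReal_eulerTerm_eq_add_tsum_cube :
    ∑' p : ℕ × ℕ, ENNReal.ofReal (eulerTerm p.1 p.2) =
      (∑' p : ℕ × ℕ, ENNReal.ofReal (zeta21Term p.1 p.2)) +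
        ∑' i : ℕ, ENNReal.ofReal (1 / ((i : ℝ) + 1) ^ 3) := by
  set c : ℕ × ℕ → ℝ≥0∞ := fun p =>
    ENNReal.ofReal (1 / ((((p.1 + p.2 : ℕ) : ℝ) + 1) ^ 2 * (p.1 + 1)))
  have hrow (j : ℕ) : ∑' k, ENNReal.ofReal (eulerTerm j k) = ∑ p ∈ antidiagonal j, c p := by
    rw [← ENNReal.ofReal_tsum_of_nonneg (eulerTerm_nonneg j) (hasSum_eulerTerm j).summable,
      (hasSum_eulerTerm j).tsum_eq, ENNReal.ofReal_sum_of_nonneg fun _ _ => by positivity,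
      Nat.sum_antidiagonal_eq_sum_range_succ_mk]
    refine sum_congr rfl fun i hi => ?_
    rw [mem_range] at hi
    simp only [c, Nat.add_sub_cancel' (Nat.lt_succ_iff.1 hi)]
  have hdiag (i : ℕ) : c (i, 0) = ENNReal.ofReal (1 / ((i : ℝ) + 1) ^ 3) := by
    simp only [c, Nat.add_zero]
    ring_nf
  have hoff (i d : ℕ) : c (i, d + 1) = ENNReal.ofReal (zeta21Term d i) := by
    simp only [c, zeta21Term]
    push_cast
    ring_nf
  calc ∑' p : ℕ × ℕ, ENNReal.ofReal (eulerTerm p.1 p.2)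
      = ∑' p, c p := by
        rw [ENNReal.tsum_prod', ENNReal.tsum_prod_eq_tsum_sum_antidiagonal c]
        exact tsum_congr hrow
    _ = ∑' i, (c (i, 0) + ∑' d, c (i, d + 1)) := by
        rw [ENNReal.tsum_prod']
        exact tsum_congr fun i => tsum_eq_zero_add' ENNReal.summable
    _ = _ := by
        simp_rw [hdiag, hoff]
        rw [ENNReal.tsum_add, add_comm, ENNReal.tsum_comm, ENNReal.tsum_prod']

theorem zeta21Term_le (j k : ℕ) :
    zeta21Term j k ≤
      1 / ((k : ℝ) + 1) * (1 / (((j + k : ℕ) : ℝ) + 1) - 1 / (((j + 1 + k : ℕ) : ℝ) + 1)) := by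
  unfold zeta21Term
  push_cast
  have hsub : 1 / ((j : ℝ) + k + 1) - 1 / ((j : ℝ) + 1 + k + 1) =
      1 / ((j + k + 1) * (j + k + 2)) := by
    field_simp
    ring
  rw [hsub, one_div_mul_one_div]
  apply one_div_le_one_div_of_le (by positivity)
  nlinarith [(by positivity : (0 : ℝ) ≤ j + k + 2), (by positivity : (0 : ℝ) ≤ k + 1)]

theorem tsum_ofReal_zeta21Term_ne_top :
    ∑' p : ℕ × ℕ, ENNReal.ofReal (zeta21Term p.1 p.2) ≠ ⊤ := by
  have hcol (k : ℕ) :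
      ∑' j, ENNReal.ofReal (zeta21Term j k) ≤ ENNReal.ofReal (1 / ((k : ℝ) + 1) ^ 2) := by
    have hanti : Antitone fun j : ℕ => 1 / (((j + k : ℕ) : ℝ) + 1) :=
      antitone_one_div_natCast_add_one.comp_monotone fun _ _ h => by gcongr
    have htel := (hasSum_sub_succ_of_antitone hanti (tendsto_one_div_add_atTop_nhds_zero_nat.comp
      (tendsto_add_atTop_nat k))).mul_left (1 / ((k : ℝ) + 1))
    have hnonneg (j : ℕ) : 0 ≤ 1 / ((k : ℝ) + 1) *
        (1 / (((j + k : ℕ) : ℝ) + 1) - 1 / (((j + 1 + k : ℕ) : ℝ) + 1)) :=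
      mul_nonneg (by positivity) (sub_nonneg.2 (hanti j.le_succ))
    calc ∑' j, ENNReal.ofReal (zeta21Term j k)
        ≤ ∑' j, ENNReal.ofReal (1 / ((k : ℝ) + 1) *
            (1 / (((j + k : ℕ) : ℝ) + 1) - 1 / (((j + 1 + k : ℕ) : ℝ) + 1))) :=
          ENNReal.tsum_le_tsum fun j => ENNReal.ofReal_le_ofReal (zeta21Term_le j k)
      _ = ENNReal.ofReal (1 / ((k : ℝ) + 1) ^ 2) := by
          rw [← ENNReal.ofReal_tsum_of_nonneg hnonneg htel.summable, htel.tsum_eq, zero_add,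
            one_div_mul_one_div, ← sq]
  have hsq : Summable fun k : ℕ => 1 / ((k : ℝ) + 1) ^ 2 := by
    simpa using (summable_nat_add_iff 1).2 (Real.summable_one_div_nat_pow.2 one_lt_two)
  rw [ENNReal.tsum_prod', ENNReal.tsum_comm]
  refine ne_top_of_le_ne_top ?_ (ENNReal.tsum_le_tsum hcol)
  rw [← ENNReal.ofReal_tsum_of_nonneg (fun _ => by positivity) hsq]
  exact ENNReal.ofReal_ne_top

theorem tsum_ofReal_zeta21Term_eq_tsum_cube :
    ∑' p : ℕ × ℕ, ENNReal.ofReal (zeta21Term p.1 p.2) =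
      ∑' i : ℕ, ENNReal.ofReal (1 / ((i : ℝ) + 1) ^ 3) := by
  rw [← ENNReal.add_right_inj tsum_ofReal_zeta21Term_ne_top, ← tsum_ofReal_eulerTerm_eq_add_self,
    tsum_ofReal_eulerTerm_eq_add_tsum_cube]

def zeta2IndexEquiv : ℕ × ℕ ≃ {q : ℕ × ℕ // q.2 < q.1 ∧ 0 < q.2} where
  toFun p := ⟨(p.1 + p.2 + 2, p.2 + 1), by omega⟩
  invFun q := (q.1.1 - q.1.2 - 1, q.1.2 - 1)
  left_inv p := by
    obtain ⟨j, k⟩ := p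
    simp only [Prod.mk.injEq]
    omega
  right_inv q := by
    obtain ⟨⟨m, n⟩, hnm, hn⟩ := q
    simp only [Subtype.mk.injEq, Prod.mk.injEq]
    omega

theorem zeta2_two_one_eq_toReal :
    zeta2 2 1 = (∑' p : ℕ × ℕ, ENNReal.ofReal (zeta21Term p.1 p.2)).toReal := by
  rw [zeta2, tsum_eq_toReal_tsum_ofReal fun _ => by positivity, ← zeta2IndexEquiv.tsum_eq]
  congr 2 with p
  simp only [zeta2IndexEquiv, Equiv.coe_fn_mk, Real.rpow_two, Real.rpow_one, zeta21Term]
  push_cast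
  ring_nf

theorem rzeta_three_eq_toReal :
    rzeta 3 = (∑' i : ℕ, ENNReal.ofReal (1 / ((i : ℝ) + 1) ^ 3)).toReal := by
  rw [rzeta, tsum_eq_toReal_tsum_ofReal fun _ => by positivity]
  congr 2 with i
  norm_cast

theorem stmt10 : zeta2 2 1 = rzeta 3 := by
  rw [zeta2_two_one_eq_toReal, rzeta_three_eq_toReal, tsum_ofReal_zeta21Term_eq_tsum_cube]
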